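/- Let α ∈ (ρ_c^0, 1) with α ≠ 1 − ρ_c^0 and β ∈ (1 − ρ_c^1, 1) with β ≠ ρ_c^1 (the transitional/canard parameter regions). Then for every δ > 0 there exists ε_0 > 0 such that for every ε ∈ (0, ε_0) and every twice continuously differentiable ρ : [0,1] → ℝ solving the stationary boundary value problem, the constant total flux satisfies |k(0)(−ε ρ'(0) + ρ(0)(1 − ρ(0))) − k(ξ*)/4| < δ; i.e., as ε → 0 the flux through the corridor converges to the maximal flux (1/4)·min_ξ k(ξ) of the bottleneck. -/

import Mathlib

open Set

/-- The total flux `j(x) = -ε ρ'(x) + ρ(x)(1-ρ(x))` of a density profile `ρ` on `[0,1]`. -/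
noncomputable def flux (ε : ℝ) (ρ : ℝ → ℝ) (x : ℝ) : ℝ :=
  -ε * derivWithin ρ (Icc (0:ℝ) 1) x + ρ x * (1 - ρ x)

/-- `ρ` is a (twice continuously differentiable) solution of the stationary boundary value
problem: `(k j)' = 0` on `[0,1]`, `j(0) = α(1-ρ(0))`, `j(1) = β ρ(1)`. -/
def IsStatSol (k : ℝ → ℝ) (ε α β : ℝ) (ρ : ℝ → ℝ) : Prop :=
  ContDiffOn ℝ 2 ρ (Icc (0:ℝ) 1) ∧
  (∀ x ∈ Icc (0:ℝ) 1, derivWithin (fun y => k y * flux ε ρ y) (Icc (0:ℝ) 1) x = 0) ∧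
  flux ε ρ 0 = α * (1 - ρ 0) ∧
  flux ε ρ 1 = β * ρ 1

/-- `ρ_c^0 = (1/2)(1 - √(1 - k(ξ*)/k(0)))`. -/
noncomputable def rhoC0 (k : ℝ → ℝ) (ξs : ℝ) : ℝ :=
  1/2 * (1 - Real.sqrt (1 - k ξs / k 0))

/-- `ρ_c^1 = (1/2)(1 + √(1 - k(ξ*)/k(1)))`. -/
noncomputable def rhoC1 (k : ℝ → ℝ) (ξs : ℝ) : ℝ :=
  1/2 * (1 + Real.sqrt (1 - k ξs / k 1))

/-! Along a solution the total flux `c = k j` is constant, so `ε ρ' = ψ := ρ (1 - ρ) - c / k`.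

If `c ≥ k(ξ*)/4 + δ`, then `c / k > 1/4` near the bottleneck and `ρ` falls there at rate
`≳ 1/ε`, while the signs of `ψ` at `ρ = 0` and `ρ = 1` trap `ρ` in `[0,1]`: impossible for small
`ε`.

If `0 < c ≤ k(ξ*)/4 - δ`, then `c / k < 1/4` uniformly, so `ψ > 0` on a strip around `ρ = 1/2`.
The condition `α > ρ_c^0` makes `ψ(0) > 0` unless `ρ(0) > 1/2`; then `ρ` crosses the strip within
`O(ε)`, after which the upper branch of `ψ = 0` is attracting and `ψ(1)` is small. With the
boundary condition `βρ(1) = c / k(1)` this contradicts `β > 1 - ρ_c^1`. Finally `c ≤ 0` is excluded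
since then `ρ(0) ≥ 1`, `ρ(1) ≤ 0`, yet `ρ' > 0` wherever `ρ = 1/2`. -/

section Fencing

variable {s : Set ℝ} {f f' : ℝ → ℝ} {a b : ℝ}

theorem HasDerivWithinAt.Ici_of_Icc_subset {d x : ℝ} (hs : Icc a b ⊆ s) (hx : x ∈ Ico a b)
    (hf : HasDerivWithinAt f d s x) : HasDerivWithinAt f d (Ici x) x :=
  (hf.mono ((Icc_subset_Icc_left hx.1).trans hs)).mono_of_mem_nhdsWithin (Icc_mem_nhdsGE hx.2)

theorem ContinuousOn.of_hasDerivWithinAt (hs : Icc a b ⊆ s)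
    (hf : ∀ x ∈ Icc a b, HasDerivWithinAt f (f' x) s x) : ContinuousOn f (Icc a b) :=
  fun x hx => (hf x hx).continuousWithinAt.mono hs

theorem image_le_of_deriv_lt_deriv_boundary {B B' : ℝ → ℝ} (hs : Icc a b ⊆ s)
    (hf : ∀ x ∈ Icc a b, HasDerivWithinAt f (f' x) s x)
    (hB : ∀ x ∈ Icc a b, HasDerivWithinAt B (B' x) s x) (ha : f a ≤ B a)
    (bound : ∀ x ∈ Ico a b, f x = B x → f' x < B' x) : ∀ x ∈ Icc a b, f x ≤ B x :=
  fun _ hx => image_le_of_deriv_right_lt_deriv_boundary' (.of_hasDerivWithinAt hs hf)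
    (fun x hx => (hf x (Ico_subset_Icc_self hx)).Ici_of_Icc_subset hs hx) ha
    (.of_hasDerivWithinAt hs hB)
    (fun x hx => (hB x (Ico_subset_Icc_self hx)).Ici_of_Icc_subset hs hx) bound hx

theorem mul_sub_le_image_sub_of_le_hasDerivWithinAt {q : ℝ} (hs : Icc a b ⊆ s) (hab : a ≤ b)
    (hf : ∀ x ∈ Icc a b, HasDerivWithinAt f (f' x) s x) (hq : ∀ x ∈ Ico a b, q ≤ f' x) :
    q * (b - a) ≤ f b - f a := by
  have hline : ∀ x ∈ Icc a b,
      HasDerivWithinAt (fun y => f a + q * (y - a)) q s x := fun x _ =>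
    (((hasDerivWithinAt_id x s).sub_const a).const_mul q).const_add (f a) |>.congr_deriv
      (mul_one q)
  have := image_le_of_deriv_right_le_deriv_boundary (f' := fun _ => q)
    (.of_hasDerivWithinAt hs hline)
    (fun x hx => (hline x (Ico_subset_Icc_self hx)).Ici_of_Icc_subset hs hx) (by simp)
    (.of_hasDerivWithinAt hs hf)
    (fun x hx => (hf x (Ico_subset_Icc_self hx)).Ici_of_Icc_subset hs hx) hq
    (right_mem_Icc.2 hab)
  linarith

end Fencing

theorem mul_half_one_sub_mul_one_sub {a b s : ℝ} (hb : b ≠ 0) (hs : s ^ 2 = 1 - a / b) :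
    b * (1/2 * (1 - s) * (1 - 1/2 * (1 - s))) = a / 4 := by
  have : b * (1 - s ^ 2) = a := by rw [hs]; field_simp; ring
  linear_combination this / 4

theorem rhoC0_spec {k : ℝ → ℝ} {ξs : ℝ} (hk0 : 0 < k 0) (hks : 0 ≤ k ξs) (hle : k ξs ≤ k 0) :
    0 ≤ rhoC0 k ξs ∧ rhoC0 k ξs ≤ 1/2 ∧ k 0 * (rhoC0 k ξs * (1 - rhoC0 k ξs)) = k ξs / 4 := by
  have harg : 0 ≤ 1 - k ξs / k 0 := sub_nonneg.2 ((div_le_one hk0).2 hle)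
  have hs1 : √(1 - k ξs / k 0) ≤ 1 :=
    Real.sqrt_le_one.2 (sub_le_self _ (div_nonneg hks hk0.le))
  refine ⟨?_, ?_, mul_half_one_sub_mul_one_sub hk0.ne' (Real.sq_sqrt harg)⟩ <;>
    unfold rhoC0 <;> linarith [Real.sqrt_nonneg (1 - k ξs / k 0)]

theorem rhoC1_spec {k : ℝ → ℝ} {ξs : ℝ} (hk1 : 0 < k 1) (hks : 0 ≤ k ξs) (hle : k ξs ≤ k 1) :
    rhoC1 k ξs ≤ 1 ∧ k 1 * (rhoC1 k ξs * (1 - rhoC1 k ξs)) = k ξs / 4 := by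
  have harg : 0 ≤ 1 - k ξs / k 1 := sub_nonneg.2 ((div_le_one hk1).2 hle)
  have hs1 : √(1 - k ξs / k 1) ≤ 1 :=
    Real.sqrt_le_one.2 (sub_le_self _ (div_nonneg hks hk1.le))
  have hid := mul_half_one_sub_mul_one_sub (s := -√(1 - k ξs / k 1)) hk1.ne'
    (by rw [neg_sq, Real.sq_sqrt harg])
  refine ⟨?_, ?_⟩ <;> unfold rhoC1
  · linarith
  · linear_combination hid

noncomputable def excess (k : ℝ → ℝ) (c : ℝ) (ρ : ℝ → ℝ) (x : ℝ) : ℝ :=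
  ρ x * (1 - ρ x) - c / k x

/-- The first integral `k j = c` of the stationary equation, with the boundary conditions. -/
structure IsFluxSol (k : ℝ → ℝ) (ε α β c : ℝ) (ρ : ℝ → ℝ) : Prop where
  hasDerivWithinAt : ∀ x ∈ Icc (0:ℝ) 1, HasDerivWithinAt ρ (excess k c ρ x / ε) (Icc 0 1) x
  left : k 0 * (α * (1 - ρ 0)) = c
  right : k 1 * (β * ρ 1) = c

namespace IsStatSol

variable {k ρ : ℝ → ℝ} {ε α β : ℝ}

theorem mul_flux_eq (h : IsStatSol k ε α β ρ) (hk : Differentiable ℝ k) :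
    ∀ x ∈ Icc (0:ℝ) 1, k x * flux ε ρ x = k 0 * flux ε ρ 0 := by
  obtain ⟨hρ, hconst, -, -⟩ := h
  have hρ' : ContDiffOn ℝ 1 (derivWithin ρ (Icc 0 1)) (Icc 0 1) :=
    hρ.derivWithin (uniqueDiffOn_Icc zero_lt_one) (by norm_num)
  have hρ1 : DifferentiableOn ℝ ρ (Icc 0 1) := hρ.differentiableOn (by norm_num)
  refine constant_of_derivWithin_zero (hk.differentiableOn.mul ?_)
    fun x hx => hconst x (Ico_subset_Icc_self hx)
  exact ((hρ'.differentiableOn one_ne_zero).const_mul (-ε)).add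
    (hρ1.mul ((differentiableOn_const 1).sub hρ1))

theorem isFluxSol (h : IsStatSol k ε α β ρ) (hk : Differentiable ℝ k)
    (hkpos : ∀ x ∈ Icc (0:ℝ) 1, 0 < k x) (hε : ε ≠ 0) :
    IsFluxSol k ε α β (k 0 * flux ε ρ 0) ρ where
  hasDerivWithinAt x hx := by
    have hflux : flux ε ρ x = k 0 * flux ε ρ 0 / k x := by
      rw [eq_div_iff (hkpos x hx).ne', mul_comm, h.mul_flux_eq hk x hx]
    have hd := ((h.1.differentiableOn (by norm_num)) x hx).hasDerivWithinAt
    refine hd.congr_deriv ?_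
    rw [excess, ← hflux, flux]
    field_simp
    ring
  left := by rw [h.2.2.1]
  right := by rw [← h.2.2.2, h.mul_flux_eq hk 1 (right_mem_Icc.2 zero_le_one)]

end IsStatSol

namespace IsFluxSol

variable {k ρ : ℝ → ℝ} {ε α β c : ℝ}

theorem flux_pos (h : IsFluxSol k ε α β c ρ) (hkpos : ∀ x ∈ Icc (0:ℝ) 1, 0 < k x) (hε : 0 < ε)
    (hα : 0 < α) (hβ : 0 < β) : 0 < c := by
  by_contra! hc
  have hk0 := hkpos 0 (left_mem_Icc.2 zero_le_one)
  have hk1 := hkpos 1 (right_mem_Icc.2 zero_le_one)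
  have hρ0 : 1 ≤ ρ 0 := by nlinarith [h.left, mul_pos hk0 hα]
  have hρ1 : ρ 1 ≤ 0 := by nlinarith [h.right, mul_pos hk1 hβ]
  have hhalf := image_le_of_deriv_lt_deriv_boundary (f := fun _ => 1/2) (f' := fun _ => 0)
    subset_rfl (fun x _ => hasDerivWithinAt_const x _ _) h.hasDerivWithinAt
    (show (1:ℝ)/2 ≤ ρ 0 by linarith)
    (fun x hx hρx => by
      have : c / k x ≤ 0 := div_nonpos_of_nonpos_of_nonneg hc (hkpos x (Ico_subset_Icc_self hx)).le
      exact div_pos (by rw [excess, ← hρx]; linarith) hε)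
    1 (right_mem_Icc.2 zero_le_one)
  linarith

theorem mem_Icc (h : IsFluxSol k ε α β c ρ) (hkpos : ∀ x ∈ Icc (0:ℝ) 1, 0 < k x) (hε : 0 < ε)
    (hα : 0 < α) (hβ : 0 < β) (hc : 0 < c) : ∀ x ∈ Icc (0:ℝ) 1, ρ x ∈ Icc 0 1 := by
  have hk0 := hkpos 0 (left_mem_Icc.2 zero_le_one)
  have hk1 := hkpos 1 (right_mem_Icc.2 zero_le_one)
  have hdown : ∀ x ∈ Icc (0:ℝ) 1, ρ x * (1 - ρ x) = 0 → excess k c ρ x / ε < 0 := fun x hx h0 =>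
    div_neg_of_neg_of_pos
      (by rw [excess, h0, zero_sub, neg_neg_iff_pos]; exact div_pos hc (hkpos x hx)) hε
  intro x hx
  constructor
  · by_contra! hneg
    have hsub : Icc x 1 ⊆ Icc 0 1 := Icc_subset_Icc_left hx.1
    have := image_le_of_deriv_lt_deriv_boundary (B := fun _ => 0) (B' := fun _ => 0) hsub
      (fun y hy => h.hasDerivWithinAt y (hsub hy)) (fun y _ => hasDerivWithinAt_const y _ _)
      hneg.le (fun y hy hy0 => hdown y (hsub (Ico_subset_Icc_self hy)) (by rw [hy0]; ring))
      1 (right_mem_Icc.2 hx.2)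
    nlinarith [h.right, mul_pos hk1 hβ]
  · refine image_le_of_deriv_lt_deriv_boundary (B := fun _ => 1) (B' := fun _ => 0) subset_rfl
      h.hasDerivWithinAt (fun y _ => hasDerivWithinAt_const y _ _) ?_
      (fun y hy hy1 => hdown y (Ico_subset_Icc_self hy) (by rw [hy1]; ring)) x hx
    nlinarith [h.left, mul_pos hk0 hα]

theorem mul_sub_le (h : IsFluxSol k ε α β c ρ) (hε : 0 < ε)
    (hρ : ∀ x ∈ Icc (0:ℝ) 1, ρ x ∈ Icc 0 1) {a b m : ℝ} (hab : a ≤ b) (hsub : Icc a b ⊆ Icc 0 1)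
    (hm : ∀ x ∈ Icc a b, 1/4 + m ≤ c / k x) : m * (b - a) ≤ ε := by
  have hdrop := mul_sub_le_image_sub_of_le_hasDerivWithinAt (f := fun x => -ρ x) (q := m / ε)
    hsub hab (fun x hx => (h.hasDerivWithinAt x (hsub hx)).neg) fun x hx => by
      rw [← neg_div, div_le_div_iff_of_pos_right hε, excess]
      nlinarith [hm x (Ico_subset_Icc_self hx), sq_nonneg (ρ x - 1/2)]
  have ha := hρ a (hsub (left_mem_Icc.2 hab))
  have hb := hρ b (hsub (right_mem_Icc.2 hab))
  rw [div_mul_eq_mul_div, div_le_iff₀ hε] at hdrop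
  nlinarith [ha.2, hb.1]

theorem hasDerivWithinAt_excess (h : IsFluxSol k ε α β c ρ) (hk : Differentiable ℝ k)
    (hkpos : ∀ x ∈ Icc (0:ℝ) 1, 0 < k x) :
    ∀ x ∈ Icc (0:ℝ) 1, HasDerivWithinAt (excess k c ρ)
      ((1 - 2 * ρ x) * (excess k c ρ x / ε) + c * deriv k x / k x ^ 2) (Icc 0 1) x := by
  intro x hx
  have hρ := h.hasDerivWithinAt x hx
  have hc : HasDerivWithinAt (fun y => c / k y) ((0 * k x - c * deriv k x) / k x ^ 2)
      (Icc 0 1) x :=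
    (hasDerivWithinAt_const x _ c).div (hk x).hasDerivAt.hasDerivWithinAt (hkpos x hx).ne'
  exact ((hρ.mul ((hasDerivWithinAt_const x _ 1).sub hρ)).sub hc).congr_deriv
    (by simp only [Pi.sub_apply]; ring)

end IsFluxSol

theorem exists_Icc_subset_Icc_forall_lt {k : ℝ → ℝ} {ξs M : ℝ} (hk : ContinuousAt k ξs)
    (hξs : ξs ∈ Ioo (0:ℝ) 1) (hM : k ξs < M) :
    ∃ η > 0, Icc (ξs - η) (ξs + η) ⊆ Icc 0 1 ∧ ∀ x ∈ Icc (ξs - η) (ξs + η), k x < M := by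
  obtain ⟨η, hη, hball⟩ := Metric.mem_nhds_iff.1
    (Filter.inter_mem (hk.eventually_lt continuousAt_const hM) (Ioo_mem_nhds hξs.1 hξs.2))
  have hwin : Icc (ξs - η / 2) (ξs + η / 2) ⊆ {x | k x < M} ∩ Ioo 0 1 := by
    rw [← Real.closedBall_eq_Icc]
    exact (Metric.closedBall_subset_ball (half_lt_self hη)).trans hball
  exact ⟨η / 2, half_pos hη, fun x hx => Ioo_subset_Icc_self (hwin hx).2, fun x hx => (hwin hx).1⟩

theorem exists_forall_flux_lt_add {k : ℝ → ℝ} {ξs α β δ : ℝ} (hk : Differentiable ℝ k)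
    (hkpos : ∀ x ∈ Icc (0:ℝ) 1, 0 < k x) (hξs : ξs ∈ Ioo (0:ℝ) 1) (hα : 0 < α) (hβ : 0 < β)
    (hδ : 0 < δ) :
    ∃ ε₀ > 0, ∀ ε : ℝ, 0 < ε → ε < ε₀ →
      ∀ ρ : ℝ → ℝ, IsStatSol k ε α β ρ → k 0 * flux ε ρ 0 < k ξs / 4 + δ := by
  obtain ⟨η, hη, hsub, hkη⟩ :=
    exists_Icc_subset_Icc_forall_lt (hk ξs).continuousAt hξs (lt_add_of_pos_right _ hδ)
  have hks := hkpos ξs (Ioo_subset_Icc_self hξs)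
  obtain ⟨m, hm0, hm⟩ : ∃ m > 0, m * (k ξs + δ) = δ / 2 :=
    ⟨δ / (2 * (k ξs + δ)), by positivity, by field_simp⟩
  refine ⟨m * (ξs + η - (ξs - η)), mul_pos hm0 (by linarith), fun ε hε hεlt ρ hsol => ?_⟩
  by_contra! hc
  have h := hsol.isFluxSol hk hkpos hε.ne'
  have hρ := h.mem_Icc hkpos hε hα hβ (by linarith)
  refine hεlt.not_ge (h.mul_sub_le hε hρ (by linarith) hsub fun x hx => ?_)
  have hkx := hkpos x (hsub hx)
  rw [le_div_iff₀ hkx]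
  nlinarith [hkη x hx]

section SlowFast

variable {ρ ψ ψ' : ℝ → ℝ} {ε C r : ℝ}

theorem exists_half_add_lt {μ : ℝ}
    (hρ : ∀ x ∈ Icc (0:ℝ) 1, HasDerivWithinAt ρ (ψ x / ε) (Icc 0 1) x)
    (hψ : ∀ x ∈ Icc (0:ℝ) 1, HasDerivWithinAt ψ (ψ' x) (Icc 0 1) x)
    (hψ' : ∀ x ∈ Icc (0:ℝ) 1, (1 - 2 * ρ x) * (ψ x / ε) - C ≤ ψ' x)
    (hstrip : ∀ x ∈ Icc (0:ℝ) 1, |ρ x - 1/2| ≤ r → μ < ψ x)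
    (hε : 0 < ε) (hr : r ≤ 1/4) (hεC : ε * C < 2 * r * μ) (hεμ : 4 * ε ≤ 3 * μ)
    (hψ0 : μ ≤ ψ 0) (hρ0 : 0 ≤ ρ 0) :
    ∃ x ∈ Icc (0:ℝ) (3/4), 1/2 + r < ρ x := by
  by_contra! hlow
  have hsub : Icc (0:ℝ) (3/4) ⊆ Icc 0 1 := Icc_subset_Icc_right (by norm_num)
  -- below the strip, `ψ = μ` forces `ε ψ' ≥ 2 r μ - ε C > 0`
  have hψμ := image_le_of_deriv_lt_deriv_boundary (f := fun _ => μ) (f' := fun _ => 0) hsub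
    (fun x _ => hasDerivWithinAt_const x _ _) (fun x hx => hψ x (hsub hx)) hψ0 fun x hx hμx => by
      have hx' := hsub (Ico_subset_Icc_self hx)
      have hρx : ρ x < 1/2 - r := by
        by_contra! h
        refine (hstrip x hx' (abs_le.2 ⟨by linarith, ?_⟩)).ne hμx
        linarith [hlow x (Ico_subset_Icc_self hx)]
      have hbound := hψ' x hx'
      rw [← hμx, mul_div_assoc', div_sub' hε.ne'] at hbound
      exact (div_pos (by nlinarith) hε).trans_le hbound
  have hrise := mul_sub_le_image_sub_of_le_hasDerivWithinAt (q := μ / ε) hsub (by norm_num)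
    (fun x hx => hρ x (hsub hx))
    fun x hx => div_le_div_of_nonneg_right (hψμ x (Ico_subset_Icc_self hx)) hε.le
  rw [div_mul_eq_mul_div, div_le_iff₀ hε] at hrise
  nlinarith [hlow (3/4) (right_mem_Icc.2 (by norm_num))]

theorem half_add_le_and_le_of_half_add_le {θ a : ℝ}
    (hρ : ∀ x ∈ Icc (0:ℝ) 1, HasDerivWithinAt ρ (ψ x / ε) (Icc 0 1) x)
    (hψ : ∀ x ∈ Icc (0:ℝ) 1, HasDerivWithinAt ψ (ψ' x) (Icc 0 1) x)
    (hψ' : ∀ x ∈ Icc (0:ℝ) 1, ψ' x ≤ (1 - 2 * ρ x) * (ψ x / ε) + C)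
    (hstrip : ∀ x ∈ Icc (0:ℝ) 1, |ρ x - 1/2| ≤ r → 0 < ψ x)
    (hε : 0 < ε) (hr : 0 ≤ r) (hθ : 0 ≤ θ) (hεC : ε * (C + 1) < 2 * r * θ)
    (ha : a ∈ Icc (0:ℝ) (3/4)) (hρa : 1/2 + r ≤ ρ a) (hψa : ψ a ≤ 1/4) :
    1/2 + r ≤ ρ 1 ∧ ψ 1 ≤ θ := by
  have hsub : Icc a 1 ⊆ Icc 0 1 := Icc_subset_Icc_left ha.1
  have ha1 : (1:ℝ) ∈ Icc a 1 := right_mem_Icc.2 (by linarith [ha.2])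
  have hup := image_le_of_deriv_lt_deriv_boundary (f := fun _ => 1/2 + r) (f' := fun _ => 0) hsub
    (fun x _ => hasDerivWithinAt_const x _ _) (fun x hx => hρ x (hsub hx)) hρa fun x hx hρx =>
      div_pos (hstrip x (hsub (Ico_subset_Icc_self hx)) (by rw [← hρx]; simp [abs_of_nonneg hr]))
        hε
  -- above the strip, `ψ ≥ θ` forces `ε ψ' ≤ -2 r θ + ε C < -ε`
  have hdecay := image_le_of_deriv_lt_deriv_boundary (B := fun x => θ + (1 - x))
    (B' := fun _ => -1) hsub (fun x hx => hψ x (hsub hx))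
    (fun x _ => ((hasDerivWithinAt_id x _).const_sub 1).const_add θ) (by linarith [ha.2])
    fun x hx hψx => by
      have hx' := hsub (Ico_subset_Icc_self hx)
      have hθψ : θ ≤ ψ x := by rw [hψx]; linarith [hx.2]
      have hρx := hup x (Ico_subset_Icc_self hx)
      refine (hψ' x hx').trans_lt ?_
      rw [mul_div_assoc', div_add' _ _ _ hε.ne', div_lt_iff₀ hε]
      nlinarith [mul_le_mul_of_nonneg_left hθψ hr]
  exact ⟨hup 1 ha1, by simpa using hdecay 1 ha1⟩

theorem half_add_le_and_le_of_strip {σ : ℝ}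
    (hρ : ∀ x ∈ Icc (0:ℝ) 1, HasDerivWithinAt ρ (ψ x / ε) (Icc 0 1) x)
    (hψ : ∀ x ∈ Icc (0:ℝ) 1, HasDerivWithinAt ψ (ψ' x) (Icc 0 1) x)
    (hψ' : ∀ x ∈ Icc (0:ℝ) 1, |ψ' x - (1 - 2 * ρ x) * (ψ x / ε)| ≤ C)
    (hψle : ∀ x ∈ Icc (0:ℝ) 1, ψ x ≤ 1/4)
    (hstrip : ∀ x ∈ Icc (0:ℝ) 1, |ρ x - 1/2| ≤ r → σ / 2 < ψ x)
    (hρ0 : 0 ≤ ρ 0) (hψ0 : 1/2 < ρ 0 ∨ σ / 2 ≤ ψ 0)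
    (hε : 0 < ε) (hr : 0 < r) (hr4 : r ≤ 1/4) (hσ : 0 < σ)
    (hεC : ε * (C + 1) < r * σ) (hεσ : 8 * ε ≤ 3 * σ) :
    1/2 + r ≤ ρ 1 ∧ ψ 1 ≤ σ := by
  have h0 : (0:ℝ) ∈ Icc 0 1 := left_mem_Icc.2 zero_le_one
  have hC : 0 ≤ C := (abs_nonneg _).trans (hψ' 0 h0)
  obtain ⟨a, ha, hρa⟩ : ∃ a ∈ Icc (0:ℝ) (3/4), 1/2 + r < ρ a := by
    by_cases hρ0r : 1/2 + r < ρ 0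
    · exact ⟨0, left_mem_Icc.2 (by norm_num), hρ0r⟩
    refine exists_half_add_lt (C := C) hρ hψ (fun x hx => by linarith [abs_le.1 (hψ' x hx)])
      hstrip hε hr4 (by nlinarith) (by linarith) ?_ hρ0
    rcases hψ0 with hρ0' | hψ0
    · exact (hstrip 0 h0 (abs_le.2 ⟨by linarith, by linarith⟩)).le
    · exact hψ0
  exact half_add_le_and_le_of_half_add_le (C := C) hρ hψ
    (fun x hx => by linarith [abs_le.1 (hψ' x hx)])
    (fun x hx hx' => (half_pos hσ).trans (hstrip x hx hx')) hε hr.le hσ.le (by nlinarith) ha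
    hρa.le (hψle a (Icc_subset_Icc_right (by norm_num) ha))

end SlowFast

theorem nonneg_and_half_lt_or_le_of_left_bc {k0 α ρ0 c p0 σ δ : ℝ} (hk0 : 0 < k0)
    (hbc : k0 * (α * (1 - ρ0)) = c) (hp0 : 0 ≤ p0) (hp0' : p0 ≤ 1/2) (hα : p0 < α)
    (hc : c ≤ k0 * (p0 * (1 - p0)) - δ) (hσ : 0 < σ) (hσδ : σ * k0 ≤ δ) :
    0 ≤ ρ0 ∧ (1/2 < ρ0 ∨ σ / 2 ≤ ρ0 * (1 - ρ0) - c / k0) := by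
  by_cases hρ0 : 1/2 < ρ0
  · exact ⟨by linarith, .inl hρ0⟩
  push Not at hρ0
  have hck : c / k0 = α * (1 - ρ0) := by rw [← hbc]; field_simp
  have hgap : α * (1 - ρ0) ≤ p0 * (1 - p0) - σ :=
    le_of_mul_le_mul_left (by linarith) hk0
  -- `α (1 - ρ0) ≥ p0 (1 - p0) - σ` as soon as `α > max p0 (ρ0 - σ)`
  have hαρ : α + σ ≤ ρ0 := by
    by_contra! h
    rcases le_or_gt p0 (ρ0 - σ) with h1 | h1
    · nlinarith [mul_pos (show 0 < α - (ρ0 - σ) by linarith) (show 0 < 1 - ρ0 by linarith),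
        mul_nonneg (show 0 ≤ ρ0 - p0 by linarith) (show 0 ≤ 1 - ρ0 - p0 by linarith)]
    · nlinarith [mul_pos (show 0 < α - p0 by linarith) (show 0 < 1 - ρ0 by linarith),
        mul_nonneg hp0 (show 0 ≤ p0 + σ - ρ0 by linarith)]
  refine ⟨by linarith, .inr ?_⟩
  rw [hck]
  nlinarith [mul_nonneg (show 0 ≤ 1/2 - ρ0 by linarith) (show 0 ≤ ρ0 - α by linarith)]

theorem sub_lt_of_right_bc {k1 β ρ1 c p1 θ δ : ℝ} (hk1 : 0 < k1) (hbc : k1 * (β * ρ1) = c)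
    (hp1 : p1 ≤ 1) (hβ : 1 - p1 < β) (hθ : 0 ≤ θ) (hθδ : θ * k1 < δ)
    (hρ1 : 1/2 ≤ ρ1) (hψ1 : ρ1 * (1 - ρ1) - c / k1 ≤ θ) :
    k1 * (p1 * (1 - p1)) - δ < c := by
  have hck : c / k1 = β * ρ1 := by rw [← hbc]; field_simp
  rw [hck] at hψ1
  rcases le_or_gt p1 ρ1 with h | h
  · nlinarith [mul_pos (mul_pos (show 0 < β - (1 - p1) by linarith) (show 0 < ρ1 by linarith)) hk1,
      mul_nonneg (mul_nonneg (show 0 ≤ 1 - p1 by linarith) (show 0 ≤ ρ1 - p1 by linarith)) hk1.le]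
  · nlinarith [mul_le_mul_of_nonneg_left (show p1 * (1 - p1) - θ ≤ β * ρ1 by
      nlinarith [mul_nonneg (show 0 ≤ p1 - ρ1 by linarith) (show 0 ≤ p1 + ρ1 - 1 by linarith)])
      hk1.le]

theorem IsFluxSol.sub_lt_flux {k ρ : ℝ → ℝ} {ε α β c ξs p0 p1 r σ D : ℝ}
    (h : IsFluxSol k ε α β c ρ) (hk : Differentiable ℝ k)
    (hkpos : ∀ x ∈ Icc (0:ℝ) 1, 0 < k x) (hkmin : ∀ x ∈ Icc (0:ℝ) 1, k ξs ≤ k x)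
    (hξs : ξs ∈ Icc (0:ℝ) 1) (hD : ∀ x ∈ Icc (0:ℝ) 1, |deriv k x| ≤ D)
    (hp0 : 0 ≤ p0) (hp0' : p0 ≤ 1/2) (hid0 : k 0 * (p0 * (1 - p0)) = k ξs / 4)
    (hp1 : p1 ≤ 1) (hid1 : k 1 * (p1 * (1 - p1)) = k ξs / 4) (hα : p0 < α) (hβ : 1 - p1 < β)
    (hε : 0 < ε) (hr : 0 < r) (hr4 : r ≤ 1/4) (hσ : 0 < σ)
    (hσk : ∀ x ∈ Icc (0:ℝ) 1, σ * k x < 2 * k ξs * r ^ 2)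
    (hεC : ε * (D / (4 * k ξs) + 1) < r * σ) (hεσ : 8 * ε ≤ 3 * σ) :
    k ξs / 4 - 2 * k ξs * r ^ 2 < c := by
  have h0 : (0:ℝ) ∈ Icc 0 1 := left_mem_Icc.2 zero_le_one
  have h1 : (1:ℝ) ∈ Icc 0 1 := right_mem_Icc.2 zero_le_one
  have hks := hkpos ξs hξs
  have hD0 : 0 ≤ D := (abs_nonneg _).trans (hD 0 h0)
  have hc0 := h.flux_pos hkpos hε (hp0.trans_lt hα) (by linarith)
  by_contra! hc
  have hck : ∀ x ∈ Icc (0:ℝ) 1, c / k x ≤ 1/4 - 2 * r ^ 2 := fun x hx =>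
    calc c / k x ≤ c / k ξs := div_le_div_of_nonneg_left hc0.le hks (hkmin x hx)
      _ ≤ 1/4 - 2 * r ^ 2 := by rw [div_le_iff₀ hks]; linarith
  have hσr : σ < 2 * r ^ 2 := lt_of_mul_lt_mul_right (by linarith [hσk ξs hξs]) hks.le
  have hstrip : ∀ x ∈ Icc (0:ℝ) 1, |ρ x - 1/2| ≤ r → σ / 2 < excess k c ρ x := fun x hx hρx => by
    have := sq_le_sq' (abs_le.1 hρx).1 (abs_le.1 hρx).2
    rw [excess]
    nlinarith [hck x hx]
  have hψle : ∀ x ∈ Icc (0:ℝ) 1, excess k c ρ x ≤ 1/4 := fun x hx => by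
    rw [excess]
    nlinarith [div_pos hc0 (hkpos x hx), sq_nonneg (ρ x - 1/2)]
  have hψ' : ∀ x ∈ Icc (0:ℝ) 1, |(1 - 2 * ρ x) * (excess k c ρ x / ε) + c * deriv k x / k x ^ 2
      - (1 - 2 * ρ x) * (excess k c ρ x / ε)| ≤ D / (4 * k ξs) := fun x hx => by
    have hkx := pow_le_pow_left₀ hks.le (hkmin x hx) 2
    rw [add_sub_cancel_left, abs_div, abs_mul, abs_of_pos hc0, abs_of_pos (pow_pos (hkpos x hx) 2)]
    calc c * |deriv k x| / k x ^ 2 ≤ k ξs / 4 * D / k ξs ^ 2 :=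
          div_le_div₀ (by positivity) (mul_le_mul (by nlinarith) (hD x hx) (abs_nonneg _)
            (by positivity)) (by positivity) hkx
      _ = D / (4 * k ξs) := by field_simp
  obtain ⟨hρ0, hψ0⟩ := nonneg_and_half_lt_or_le_of_left_bc (hkpos 0 h0) h.left hp0 hp0' hα
    (by rw [hid0]; linarith) hσ (hσk 0 h0).le
  obtain ⟨hρ1, hψ1⟩ := half_add_le_and_le_of_strip h.hasDerivWithinAt
    (h.hasDerivWithinAt_excess hk hkpos) hψ' hψle hstrip hρ0 hψ0 hε hr hr4 hσ hεC hεσ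
  have := sub_lt_of_right_bc (hkpos 1 h1) h.right hp1 hβ hσ.le (hσk 1 h1) (by linarith) hψ1
  linarith

theorem exists_forall_sub_lt_flux {k : ℝ → ℝ} {ξs α β p0 p1 δ : ℝ} (hk : ContDiff ℝ 1 k)
    (hkpos : ∀ x ∈ Icc (0:ℝ) 1, 0 < k x) (hkmin : ∀ x ∈ Icc (0:ℝ) 1, k ξs ≤ k x)
    (hξs : ξs ∈ Icc (0:ℝ) 1)
    (hp0 : 0 ≤ p0) (hp0' : p0 ≤ 1/2) (hid0 : k 0 * (p0 * (1 - p0)) = k ξs / 4)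
    (hp1 : p1 ≤ 1) (hid1 : k 1 * (p1 * (1 - p1)) = k ξs / 4) (hα : p0 < α) (hβ : 1 - p1 < β)
    (hδ : 0 < δ) :
    ∃ ε₀ > 0, ∀ ε : ℝ, 0 < ε → ε < ε₀ →
      ∀ ρ : ℝ → ℝ, IsStatSol k ε α β ρ → k ξs / 4 - δ < k 0 * flux ε ρ 0 := by
  have hks := hkpos ξs hξs
  obtain ⟨K, hK⟩ := isCompact_Icc.exists_bound_of_continuousOn hk.continuous.continuousOn
  obtain ⟨D, hD⟩ :=
    isCompact_Icc.exists_bound_of_continuousOn (hk.continuous_deriv le_rfl).continuousOn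
  have hkK : ∀ x ∈ Icc (0:ℝ) 1, k x ≤ K := fun x hx => (le_abs_self _).trans (hK x hx)
  have hD0 : 0 ≤ D := (norm_nonneg _).trans (hD ξs hξs)
  set r := min (1/4) (δ / k ξs)
  have hr : 0 < r := lt_min (by norm_num) (div_pos hδ hks)
  have hrδ : 2 * k ξs * r ^ 2 ≤ δ := by
    have h1 : r ≤ 1/4 := min_le_left _ _
    have h2 : k ξs * r ≤ δ := (le_div_iff₀' hks).1 (min_le_right _ _)
    nlinarith
  set σ := k ξs * r ^ 2 / K
  have hσ : 0 < σ := by have := hks.trans_le (hkK ξs hξs); positivity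
  have hσk : ∀ x ∈ Icc (0:ℝ) 1, σ * k x < 2 * k ξs * r ^ 2 := fun x hx => by
    have := hks.trans_le (hkK ξs hξs)
    calc σ * k x ≤ σ * K := mul_le_mul_of_nonneg_left (hkK x hx) hσ.le
      _ = k ξs * r ^ 2 := div_mul_cancel₀ _ this.ne'
      _ < 2 * k ξs * r ^ 2 := by nlinarith [pow_pos hr 2]
  refine ⟨min (r * σ / (D / (4 * k ξs) + 1)) (3 * σ / 8), lt_min (by positivity) (by positivity),
    fun ε hε hεlt ρ hsol => ?_⟩
  have hε1 := (lt_min_iff.1 hεlt).1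
  rw [lt_div_iff₀ (by positivity)] at hε1
  have := (hsol.isFluxSol (hk.differentiable one_ne_zero) hkpos hε.ne').sub_lt_flux
    (hk.differentiable one_ne_zero) hkpos hkmin hξs hD hp0 hp0' hid0 hp1
    hid1 hα hβ hε hr (min_le_left _ _) hσ hσk hε1 (by linarith [(lt_min_iff.1 hεlt).2])
  linarith

theorem bvp_flux_converges_to_bottleneck_flux_general
    (k : ℝ → ℝ) (ξs : ℝ)
    (hk : ContDiff ℝ 2 k)
    (hkpos : ∀ x ∈ Icc (0:ℝ) 1, 0 < k x)
    (hξs : ξs ∈ Ioo (0:ℝ) 1)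
    (hmin : ∀ x ∈ Icc (0:ℝ) 1, x ≠ ξs → k ξs < k x)
    (α β : ℝ)
    (hα1 : rhoC0 k ξs < α)
    (hβ1 : 1 - rhoC1 k ξs < β) :
    ∀ δ > 0, ∃ ε₀ > 0, ∀ ε : ℝ, 0 < ε → ε < ε₀ →
      ∀ ρ : ℝ → ℝ, IsStatSol k ε α β ρ →
        |k 0 * flux ε ρ 0 - k ξs / 4| < δ := by
  intro δ hδ
  have hkmin : ∀ x ∈ Icc (0:ℝ) 1, k ξs ≤ k x := fun x hx =>
    (eq_or_ne x ξs).elim (fun h => h ▸ le_rfl) fun h => (hmin x hx h).le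
  have hξ := Ioo_subset_Icc_self hξs
  have hks := (hkpos ξs hξ).le
  obtain ⟨hp0, hp0', hid0⟩ :=
    rhoC0_spec (hkpos 0 (left_mem_Icc.2 zero_le_one)) hks (hkmin 0 (left_mem_Icc.2 zero_le_one))
  obtain ⟨hp1, hid1⟩ :=
    rhoC1_spec (hkpos 1 (right_mem_Icc.2 zero_le_one)) hks (hkmin 1 (right_mem_Icc.2 zero_le_one))
  obtain ⟨ε₁, hε₁, hupper⟩ := exists_forall_flux_lt_add (hk.differentiable two_ne_zero) hkpos hξs
    (hp0.trans_lt hα1) (show 0 < β by linarith) hδ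
  obtain ⟨ε₂, hε₂, hlower⟩ := exists_forall_sub_lt_flux (hk.of_le one_le_two) hkpos hkmin hξ
    hp0 hp0' hid0 hp1 hid1 hα1 hβ1 hδ
  refine ⟨min ε₁ ε₂, lt_min hε₁ hε₂, fun ε hε hεlt ρ hρ => abs_sub_lt_iff.2 ⟨?_, ?_⟩⟩
  · linarith [hupper ε hε (hεlt.trans_le (min_le_left _ _)) ρ hρ]
  · linarith [hlower ε hε (hεlt.trans_le (min_le_right _ _)) ρ hρ]

/-- In the transitional/canard parameter regions
(`ρ_c^0 < α < 1`, `α ≠ 1 - ρ_c^0`; `1 - ρ_c^1 < β < 1`, `β ≠ ρ_c^1`), the constant total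
flux `k(0) j(0)` of any solution of the stationary boundary value problem converges, as
`ε → 0`, to the maximal bottleneck flux `k(ξ*)/4`. -/
theorem bvp_flux_converges_to_bottleneck_flux
    (k : ℝ → ℝ) (ξs : ℝ)
    (hk : ContDiff ℝ 2 k)
    (hkpos : ∀ x ∈ Icc (0:ℝ) 1, 0 < k x)
    (hξs : ξs ∈ Ioo (0:ℝ) 1)
    (hmin : ∀ x ∈ Icc (0:ℝ) 1, x ≠ ξs → k ξs < k x)
    (hk's : deriv k ξs = 0)
    (hk''s : 0 < deriv (deriv k) ξs)
    (α β : ℝ)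
    (hα1 : rhoC0 k ξs < α) (hα2 : α < 1) (hα3 : α ≠ 1 - rhoC0 k ξs)
    (hβ1 : 1 - rhoC1 k ξs < β) (hβ2 : β < 1) (hβ3 : β ≠ rhoC1 k ξs) :
    ∀ δ > 0, ∃ ε₀ > 0, ∀ ε : ℝ, 0 < ε → ε < ε₀ →
      ∀ ρ : ℝ → ℝ, IsStatSol k ε α β ρ →
        |k 0 * flux ε ρ 0 - k ξs / 4| < δ :=
  bvp_flux_converges_to_bottleneck_flux_general k ξs hk hkpos hξs hmin α β hα1 hβ1
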